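/- arXiv:1010.3368 — 5 statements merged into one kernel-verified Lean document; each statement's English description precedes it below -/
import Mathlib

section
/- For a metric space (X,d) with a bornology 𝔅, the selection principles α₂(Γ_{𝔅^s},Γ_{𝔅^s}), α₃(Γ_{𝔅^s},Γ_{𝔅^s}), α₄(Γ_{𝔅^s},Γ_{𝔅^s}) and S₁(Γ_{𝔅^s},Γ_{𝔅^s}) are all equivalent. -/
open Set Metric

variable {X : Type*} [MetricSpace X]

/-- The δ-enlargement of a set `B`: union of open δ-balls around points of `B`. -/
def enl (B : Set X) (δ : ℝ) : Set X := ⋃ b ∈ B, Metric.ball b δ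

/-- A bornology (in the sense of Hu/Hogbe-Nlend): a family of nonempty subsets
covering `X`, closed under finite unions and hereditary. -/
def IsBorn (𝔅 : Set (Set X)) : Prop :=
  (∀ B ∈ 𝔅, B.Nonempty) ∧ (⋃₀ 𝔅 = Set.univ) ∧
  (∀ B₁ ∈ 𝔅, ∀ B₂ ∈ 𝔅, B₁ ∪ B₂ ∈ 𝔅) ∧
  (∀ B ∈ 𝔅, ∀ A : Set X, A ⊆ B → A.Nonempty → A ∈ 𝔅)

/-- The bornology has a base consisting of closed sets. -/
def HasClosedBase (𝔅 : Set (Set X)) : Prop :=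
  ∃ 𝔅₀ ⊆ 𝔅, (∀ B ∈ 𝔅₀, IsClosed B) ∧ ∀ B ∈ 𝔅, ∃ B₀ ∈ 𝔅₀, B ⊆ B₀

/-- A strong 𝔅-cover (𝔅ˢ-cover): an open cover 𝒰 of X with X ∉ 𝒰 such that for
every `B ∈ 𝔅` some δ-enlargement of `B` lies in a member of 𝒰. -/
def IsBsCover (𝔅 : Set (Set X)) (𝒰 : Set (Set X)) : Prop :=
  (∀ U ∈ 𝒰, IsOpen U) ∧ Set.univ ∉ 𝒰 ∧ ⋃₀ 𝒰 = Set.univ ∧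
  ∀ B ∈ 𝔅, ∃ U ∈ 𝒰, ∃ δ > 0, enl B δ ⊆ U

/-- A γ_{𝔅ˢ}-cover: an infinite countable open cover `(U n)` such that for every
`B ∈ 𝔅` there are `n₀` and positive reals `δ n` (for `n ≥ n₀`) with
`enl B (δ n) ⊆ U n` for all `n ≥ n₀`. -/
def IsGammaCover (𝔅 : Set (Set X)) (U : ℕ → Set X) : Prop :=
  (∀ n, IsOpen (U n)) ∧ (⋃ n, U n) = Set.univ ∧ (Set.range U).Infinite ∧
  ∀ B ∈ 𝔅, ∃ n₀ : ℕ, ∃ δ : ℕ → ℝ, ∀ n ≥ n₀, 0 < δ n ∧ enl B (δ n) ⊆ U n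

/-- `g` belongs to the basic τˢ_𝔅-neighborhood `[B,ε]ˢ(f)`. -/
def SNbhd (B : Set X) (ε : ℝ) (f g : C(X, ℝ)) : Prop :=
  ∃ δ > 0, ∀ x ∈ enl B δ, |g x - f x| < ε

/-- `f` lies in the τˢ_𝔅-closure of `A`. -/
def SCl (𝔅 : Set (Set X)) (A : Set C(X, ℝ)) (f : C(X, ℝ)) : Prop :=
  ∀ B ∈ 𝔅, ∀ ε > 0, ∃ g ∈ A, SNbhd B ε f g

/-- The sequence `g` τˢ_𝔅-converges to `f`. -/
def SConv (𝔅 : Set (Set X)) (g : ℕ → C(X, ℝ)) (f : C(X, ℝ)) : Prop :=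
  ∀ B ∈ 𝔅, ∀ ε > 0, ∃ N : ℕ, ∀ n ≥ N, SNbhd B ε f (g n)

/-- S₁(Γ_{𝔅ˢ},Γ_{𝔅ˢ}). -/
def S1Gamma (𝔅 : Set (Set X)) : Prop :=
  ∀ U : ℕ → ℕ → Set X, (∀ n, IsGammaCover 𝔅 (U n)) →
    ∃ f : ℕ → ℕ, IsGammaCover 𝔅 (fun n => U n (f n))

/-- α₂(Γ_{𝔅ˢ},Γ_{𝔅ˢ}). -/
def Alpha2Gamma (𝔅 : Set (Set X)) : Prop :=
  ∀ U : ℕ → ℕ → Set X, (∀ n, IsGammaCover 𝔅 (U n)) →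
    ∃ V : ℕ → Set X, IsGammaCover 𝔅 V ∧
      ∀ n, (Set.range V ∩ Set.range (U n)).Infinite

/-- α₃(Γ_{𝔅ˢ},Γ_{𝔅ˢ}). -/
def Alpha3Gamma (𝔅 : Set (Set X)) : Prop :=
  ∀ U : ℕ → ℕ → Set X, (∀ n, IsGammaCover 𝔅 (U n)) →
    ∃ V : ℕ → Set X, IsGammaCover 𝔅 V ∧
      {n | (Set.range V ∩ Set.range (U n)).Infinite}.Infinite

/-- α₄(Γ_{𝔅ˢ},Γ_{𝔅ˢ}). -/
def Alpha4Gamma (𝔅 : Set (Set X)) : Prop :=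
  ∀ U : ℕ → ℕ → Set X, (∀ n, IsGammaCover 𝔅 (U n)) →
    ∃ V : ℕ → Set X, IsGammaCover 𝔅 V ∧
      {n | (Set.range V ∩ Set.range (U n)).Nonempty}.Infinite

/-!
A γ_{𝔅ˢ}-sequence eventually contains every point, so a set other than `X` occurs in it only
finitely often. Hence S₁ ⇒ α₂: after discarding the members equal to `X`, apply S₁ to the
covers listed along `ℕ × ℕ ≅ ℕ`, each one infinitely often; the selection then contains
infinitely many distinct members of every cover.

For α₄ ⇒ S₁ replace the `n`-th cover by the intersections of the first `n + 1` covers, reindexed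
so that no set is a member of two of them. A γ-cover `V` meeting infinitely many of these, say the
`ν k`-th ones, meets them in pairwise distinct sets, which therefore form a γ-sequence; since
`k ≤ ν k`, each of them lies in a member of the `k`-th original cover, and these members are the
selection.
-/

open Filter Function

theorem IsBorn.singleton_mem {Y : Type*} {𝔅 : Set (Set Y)} (h𝔅 : IsBorn 𝔅) (x : Y) :
    {x} ∈ 𝔅 := by
  obtain ⟨-, hcover, -, hhered⟩ := h𝔅
  obtain ⟨B, hB, hxB⟩ := mem_sUnion.1 (hcover ▸ mem_univ x)
  exact hhered B hB {x} (singleton_subset_iff.2 hxB) (singleton_nonempty x)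

theorem enl_mono {B : Set X} {δ δ' : ℝ} (h : δ ≤ δ') : enl B δ ⊆ enl B δ' :=
  iUnion₂_mono fun _ _ => ball_subset_ball h

def strongNhds (B : Set X) : Filter X where
  sets := {U | ∃ δ > 0, enl B δ ⊆ U}
  univ_sets := ⟨1, one_pos, subset_univ _⟩
  sets_of_superset := fun ⟨δ, hδ, hU⟩ hUV => ⟨δ, hδ, hU.trans hUV⟩
  inter_sets := fun ⟨δ, hδ, hU⟩ ⟨δ', hδ', hV⟩ =>
    ⟨min δ δ', lt_min hδ hδ', subset_inter ((enl_mono (min_le_left _ _)).trans hU)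
      ((enl_mono (min_le_right _ _)).trans hV)⟩

theorem subset_of_mem_strongNhds {B U : Set X} (h : U ∈ strongNhds B) : B ⊆ U := by
  obtain ⟨δ, hδ, hU⟩ := h
  exact fun x hx => hU (mem_biUnion hx (mem_ball_self hδ))

def IsGammaSeq (𝔅 : Set (Set X)) (U : ℕ → Set X) : Prop :=
  ∀ B ∈ 𝔅, ∀ᶠ n in atTop, U n ∈ strongNhds B

namespace IsGammaSeq

variable {𝔅 : Set (Set X)} {U V : ℕ → Set X}

theorem eventually_mem (h𝔅 : ∀ x : X, {x} ∈ 𝔅) (hU : IsGammaSeq 𝔅 U) (x : X) :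
    ∀ᶠ n in atTop, x ∈ U n :=
  (hU {x} (h𝔅 x)).mono fun _ hn => subset_of_mem_strongNhds hn rfl

theorem finite_preimage_singleton (h𝔅 : ∀ x : X, {x} ∈ 𝔅) (hU : IsGammaSeq 𝔅 U)
    {T : Set X} (hT : T ≠ univ) : (U ⁻¹' {T}).Finite := by
  obtain ⟨x, hx⟩ := (ne_univ_iff_exists_notMem T).1 hT
  have hmem := hU.eventually_mem h𝔅 x
  rw [← Nat.cofinite_eq_atTop, eventually_cofinite] at hmem
  exact hmem.subset fun n (hn : U n = T) => show x ∉ U n by rwa [hn]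

theorem infinite_image (h𝔅 : ∀ x : X, {x} ∈ 𝔅) (hU : IsGammaSeq 𝔅 U) {K : Set ℕ}
    (hK : K.Infinite) (hne : ∀ k ∈ K, U k ≠ univ) : (U '' K).Infinite := fun hfin =>
  hK <| (hfin.preimage' fun _ ⟨k, hk, hkT⟩ =>
    hU.finite_preimage_singleton h𝔅 (hkT ▸ hne k hk)).subset (subset_preimage_image U K)

theorem comp_injective (hU : IsGammaSeq 𝔅 U) {e : ℕ → ℕ} (he : Injective e) :
    IsGammaSeq 𝔅 (U ∘ e) := fun B hB => by
  have hB := hU B hB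
  rw [← Nat.cofinite_eq_atTop] at hB ⊢
  exact he.tendsto_cofinite.eventually hB

theorem of_injective_mem_range (hV : IsGammaSeq 𝔅 V) {T : ℕ → Set X} (hT : Injective T)
    (hTV : ∀ k, T k ∈ range V) : IsGammaSeq 𝔅 T := by
  choose g hg using hTV
  obtain rfl : V ∘ g = T := funext hg
  exact hV.comp_injective hT.of_comp

theorem mono (hU : IsGammaSeq 𝔅 U) (hUV : ∀ n, U n ⊆ V n) : IsGammaSeq 𝔅 V :=
  fun B hB => (hU B hB).mono fun n hn => mem_of_superset hn (hUV n)

theorem biInter_Iic {U : ℕ → ℕ → Set X} (hU : ∀ i, IsGammaSeq 𝔅 (U i)) (n : ℕ) :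
    IsGammaSeq 𝔅 fun m => ⋂ i ∈ Iic n, U i m := fun B hB =>
  ((eventually_all_finite (finite_Iic n)).2 fun i _ => hU i B hB).mono fun _ hm =>
    (biInter_mem (finite_Iic n)).2 hm

theorem isGammaCover (h𝔅 : ∀ x : X, {x} ∈ 𝔅) (hU : IsGammaSeq 𝔅 U)
    (hop : ∀ n, IsOpen (U n)) (hne : ∀ n, U n ≠ univ) : IsGammaCover 𝔅 U := by
  refine ⟨hop, eq_univ_of_forall fun x => mem_iUnion.2 (hU.eventually_mem h𝔅 x).exists,
    ?_, fun B hB => ?_⟩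
  · simpa using hU.infinite_image h𝔅 infinite_univ fun k _ => hne k
  · obtain ⟨n₀, hn₀⟩ := eventually_atTop.1 (hU B hB)
    have hδ : ∀ n, ∃ δ : ℝ, n ≥ n₀ → 0 < δ ∧ enl B δ ⊆ U n := fun n =>
      (em (n ≥ n₀)).elim (fun hn => (hn₀ n hn).imp fun _ h _ => h)
        fun hn => ⟨0, fun h => absurd h hn⟩
    choose δ hδ using hδ
    exact ⟨n₀, δ, hδ⟩

end IsGammaSeq

namespace IsGammaCover

variable {𝔅 : Set (Set X)} {U : ℕ → Set X}

theorem isGammaSeq (hU : IsGammaCover 𝔅 U) : IsGammaSeq 𝔅 U := fun B hB =>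
  let ⟨n₀, δ, hδ⟩ := hU.2.2.2 B hB
  eventually_atTop.2 ⟨n₀, fun n hn => ⟨δ n, hδ n hn⟩⟩

theorem exists_comp_ne_univ (h𝔅 : ∀ x : X, {x} ∈ 𝔅) (hU : IsGammaCover 𝔅 U) :
    ∃ e : ℕ → ℕ, IsGammaCover 𝔅 (U ∘ e) ∧ ∀ n, U (e n) ≠ univ := by
  have hinf : {n | U n ≠ univ}.Infinite := fun hfin => by
    refine hU.2.2.1 (((hfin.image U).insert univ).subset ?_)
    rintro _ ⟨n, rfl⟩
    by_cases h : U n = univ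
    exacts [Or.inl h, Or.inr ⟨n, h, rfl⟩]
  obtain ⟨e, he, hne⟩ := extraction_of_frequently_atTop (Nat.frequently_atTop_iff_infinite.2 hinf)
  exact ⟨e, (hU.isGammaSeq.comp_injective he.injective).isGammaCover h𝔅 (fun n => hU.1 _) hne,
    hne⟩

end IsGammaCover

noncomputable def pickDistinct {α : Type*} [Nonempty α] (R : ℕ → Set α) : ℕ → α
  | t => Classical.epsilon fun y => y ∈ R t ∧ ∀ s, s < t → y ≠ pickDistinct R s
  termination_by t => t
  decreasing_by assumption

theorem exists_injective_forall_mem {α : Type*} {R : ℕ → Set α} (hR : ∀ n, (R n).Infinite) :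
    ∃ x : ℕ → α, Injective x ∧ ∀ n, x n ∈ R n := by
  have : Nonempty α := ⟨(hR 0).nonempty.some⟩
  have hspec : ∀ t, pickDistinct R t ∈ R t ∧
      ∀ s, s < t → pickDistinct R t ≠ pickDistinct R s := by
    intro t
    obtain ⟨y, hy, hy'⟩ := ((hR t).sdiff ((finite_Iio t).image (pickDistinct R))).nonempty
    have hex : ∃ y, y ∈ R t ∧ ∀ s, s < t → y ≠ pickDistinct R s :=
      ⟨y, hy, fun s hs h => hy' ⟨s, hs, h.symm⟩⟩
    rw [pickDistinct]
    exact Classical.epsilon_spec hex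
  exact ⟨pickDistinct R, Injective.of_lt_imp_ne fun s t hst => ((hspec t).2 s hst).symm,
    fun t => (hspec t).1⟩

theorem exists_injective_uncurry_comp {α : Type*} {W : ℕ → ℕ → α}
    (hW : ∀ n, (range (W n)).Infinite) :
    ∃ c : ℕ → ℕ → ℕ, Injective (uncurry fun n j => W n (c n j)) := by
  obtain ⟨x, hx, hxW⟩ := exists_injective_forall_mem fun t => hW (Nat.unpair t).1
  choose c hc using hxW
  refine ⟨fun n j => c (Nat.pair n j), ?_⟩
  have hcomp : (uncurry fun n j => W n (c (Nat.pair n j))) = x ∘ Nat.pairEquiv := by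
    ext ⟨n, j⟩
    simpa using hc (Nat.pair n j)
  rw [hcomp]
  exact hx.comp Nat.pairEquiv.injective

section Selection

variable {𝔅 : Set (Set X)}

theorem exists_injective_gammaCover_refinement (h𝔅 : ∀ x : X, {x} ∈ 𝔅)
    {U : ℕ → ℕ → Set X} (hU : ∀ n, IsGammaCover 𝔅 (U n)) (hne : ∀ n m, U n m ≠ univ) :
    ∃ (W : ℕ → ℕ → Set X) (g : ℕ → ℕ → ℕ), (∀ n, IsGammaCover 𝔅 (W n)) ∧
      Injective (uncurry W) ∧ ∀ i n m, i ≤ n → W n m ⊆ U i (g n m) := by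
  set W₀ : ℕ → ℕ → Set X := fun n m => ⋂ i ∈ Iic n, U i m
  have hW₀U : ∀ i n m, i ≤ n → W₀ n m ⊆ U i m := fun i n m hi => biInter_subset_of_mem hi
  have hW₀open : ∀ n m, IsOpen (W₀ n m) := fun n m =>
    (finite_Iic n).isOpen_biInter fun i _ => (hU i).1 m
  have hW₀ne : ∀ n m, W₀ n m ≠ univ := fun n m h =>
    hne 0 m (univ_subset_iff.1 (h ▸ hW₀U 0 n m n.zero_le))
  have hW₀ : ∀ n, IsGammaCover 𝔅 (W₀ n) := fun n =>
    (IsGammaSeq.biInter_Iic (fun i => (hU i).isGammaSeq) n).isGammaCover h𝔅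
      (hW₀open n) (hW₀ne n)
  obtain ⟨c, hc⟩ := exists_injective_uncurry_comp fun n => (hW₀ n).2.2.1
  have hcn : ∀ n, Injective (c n) := fun n =>
    Injective.of_comp (f := W₀ n) (hc.comp (Prod.mk_right_injective n))
  refine ⟨fun n j => W₀ n (c n j), c, fun n => ?_, hc, fun i n m hi => hW₀U i n _ hi⟩
  exact ((hW₀ n).isGammaSeq.comp_injective (hcn n)).isGammaCover h𝔅 (fun _ => hW₀open n _)
    fun _ => hW₀ne n _

theorem Alpha2Gamma.alpha3Gamma (h : Alpha2Gamma 𝔅) : Alpha3Gamma 𝔅 := fun U hU =>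
  let ⟨V, hV, hVU⟩ := h U hU
  ⟨V, hV, infinite_univ.mono fun n _ => hVU n⟩

theorem Alpha3Gamma.alpha4Gamma (h : Alpha3Gamma 𝔅) : Alpha4Gamma 𝔅 := fun U hU =>
  let ⟨V, hV, hVU⟩ := h U hU
  ⟨V, hV, hVU.mono fun _ hn => hn.nonempty⟩

theorem S1Gamma.alpha2Gamma (h𝔅 : ∀ x : X, {x} ∈ 𝔅) (h : S1Gamma 𝔅) : Alpha2Gamma 𝔅 := by
  intro U hU
  choose e he hne using fun n => (hU n).exists_comp_ne_univ h𝔅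
  obtain ⟨f, hV⟩ := h (fun k => U (Nat.unpair k).1 ∘ e (Nat.unpair k).1) fun k => he _
  refine ⟨_, hV, fun n => ?_⟩
  have hfiber := hV.isGammaSeq.infinite_image h𝔅
    (infinite_range_of_injective fun _ _ hab => (Nat.pair_eq_pair.1 hab).2)
    (by rintro _ ⟨j, rfl⟩; simpa using hne n _)
  refine hfiber.mono ?_
  rintro _ ⟨_, ⟨j, rfl⟩, rfl⟩
  exact ⟨mem_range_self _, e n (f (Nat.pair n j)), by simp⟩

theorem Alpha4Gamma.s1Gamma (h𝔅 : ∀ x : X, {x} ∈ 𝔅) (h : Alpha4Gamma 𝔅) : S1Gamma 𝔅 := by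
  intro U hU
  choose e he hne using fun n => (hU n).exists_comp_ne_univ h𝔅
  obtain ⟨W, g, hW, hWinj, hWU⟩ := exists_injective_gammaCover_refinement h𝔅 he fun n m => hne n m
  obtain ⟨V, hV, hVW⟩ := h W hW
  obtain ⟨ν, hν, hνW⟩ := extraction_of_frequently_atTop (Nat.frequently_atTop_iff_infinite.2 hVW)
  have hj : ∀ k, ∃ j, W (ν k) j ∈ range V := fun k =>
    let ⟨_, hTV, j, hj⟩ := hνW k
    ⟨j, hj ▸ hTV⟩
  choose j hj using hj
  have hνj : Injective fun k => (ν k, j k) := fun a b hab => hν.injective (Prod.ext_iff.1 hab).1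
  have hT : IsGammaSeq 𝔅 fun k => W (ν k) (j k) :=
    hV.isGammaSeq.of_injective_mem_range (hWinj.comp hνj) hj
  exact ⟨fun k => e k (g (ν k) (j k)), (hT.mono fun k => hWU k _ _ (hν.id_le k)).isGammaCover h𝔅
    (fun k => (hU k).1 _) fun k => hne k _⟩
end Selection

theorem statement8 (𝔅 : Set (Set X)) (h𝔅 : IsBorn 𝔅) :
    (Alpha2Gamma 𝔅 ↔ Alpha3Gamma 𝔅) ∧ (Alpha3Gamma 𝔅 ↔ Alpha4Gamma 𝔅) ∧
    (Alpha4Gamma 𝔅 ↔ S1Gamma 𝔅) := by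
  have h4S : Alpha4Gamma 𝔅 → S1Gamma 𝔅 := Alpha4Gamma.s1Gamma h𝔅.singleton_mem
  have hS2 : S1Gamma 𝔅 → Alpha2Gamma 𝔅 := S1Gamma.alpha2Gamma h𝔅.singleton_mem
  exact ⟨⟨Alpha2Gamma.alpha3Gamma, fun h => hS2 (h4S h.alpha4Gamma)⟩,
    ⟨Alpha3Gamma.alpha4Gamma, fun h => (hS2 (h4S h)).alpha3Gamma⟩,
    ⟨h4S, fun h => (hS2 h).alpha3Gamma.alpha4Gamma⟩⟩
end

section
/- Let (X,d) be a metric space with a bornology 𝔅. If X satisfies S₁(Γ_{𝔅^s},Γ_{𝔅^s}), then X satisfies α₂(Γ_{𝔅^s},Γ_{𝔅^s}): for every sequence (𝒰_n : n ∈ ℕ) of γ_{𝔅^s}-covers of X there is a γ_{𝔅^s}-cover 𝒱 of X such that 𝒱 ∩ 𝒰_n is infinite for every n. -/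
open Set Metric

variable {X : Type*} [MetricSpace X]

/-!
Each γ_{𝔅ˢ}-cover `U n` can be re-enumerated without repetitions and then split, along the rows
of `Nat.pair`, into countably many pairwise disjoint γ_{𝔅ˢ}-subcovers. Applying S₁ to the
doubly indexed family of all these pieces yields a γ_{𝔅ˢ}-cover containing one member from each
piece; the members selected from the infinitely many pieces of `U n` are pairwise distinct.
-/

open Filter

theorem IsGammaCover.comp_injective {𝔅 : Set (Set X)} (h𝔅 : ⋃₀ 𝔅 = univ) {U : ℕ → Set X}
    (hU : IsGammaCover 𝔅 U) {s : ℕ → ℕ} (hs : Function.Injective s)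
    (hinf : (range (U ∘ s)).Infinite) : IsGammaCover 𝔅 (U ∘ s) := by
  obtain ⟨hopen, -, -, htail⟩ := hU
  have hs_tail : ∀ N, ∃ j₀, ∀ j ≥ j₀, N ≤ s j := fun N =>
    eventually_atTop.1 (tendsto_atTop.1 hs.nat_tendsto_atTop N)
  have htail' : ∀ B ∈ 𝔅, ∃ j₀ : ℕ, ∃ δ : ℕ → ℝ, ∀ j ≥ j₀, 0 < δ j ∧ enl B (δ j) ⊆ U (s j) := by
    intro B hB
    obtain ⟨n₀, δ, hδ⟩ := htail B hB
    obtain ⟨j₀, hj₀⟩ := hs_tail n₀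
    exact ⟨j₀, δ ∘ s, fun j hj => hδ (s j) (hj₀ j hj)⟩
  refine ⟨fun j => hopen (s j), eq_univ_of_forall fun x => ?_, hinf, htail'⟩
  obtain ⟨B, hB, hxB⟩ := h𝔅 ▸ mem_univ x
  obtain ⟨j₀, δ, hδ⟩ := htail' B hB
  obtain ⟨hδpos, hsub⟩ := hδ j₀ le_rfl
  exact mem_iUnion.2 ⟨j₀, hsub (mem_biUnion hxB (Metric.mem_ball_self hδpos))⟩

theorem exists_injective_comp_of_infinite_range {α : Type*} {U : ℕ → α}
    (hU : (range U).Infinite) : ∃ e : ℕ → ℕ, Function.Injective (U ∘ e) := by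
  choose e he using fun k => (hU.natEmbedding _ k).2
  exact ⟨e, fun k k' h => (hU.natEmbedding _).injective (Subtype.ext (by simpa [he] using h))⟩

/-- The pieces `U ∘ e ∘ Nat.pair k` are pairwise disjoint subfamilies because `U ∘ e` is
injective. -/
theorem IsGammaCover.exists_split {𝔅 : Set (Set X)} (h𝔅 : ⋃₀ 𝔅 = univ) {U : ℕ → Set X}
    (hU : IsGammaCover 𝔅 U) :
    ∃ e : ℕ → ℕ, Function.Injective (U ∘ e) ∧
      ∀ k, IsGammaCover 𝔅 (fun j => U (e (Nat.pair k j))) := by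
  obtain ⟨e, he⟩ := exists_injective_comp_of_infinite_range hU.2.2.1
  refine ⟨e, he, fun k => ?_⟩
  have hrow : Function.Injective (U ∘ e ∘ Nat.pair k) :=
    he.comp fun _ _ h => (Nat.pair_eq_pair.1 h).2
  exact hU.comp_injective h𝔅 (Function.Injective.of_comp (f := U) hrow)
    (infinite_range_of_injective hrow)

theorem statement10 (𝔅 : Set (Set X)) (h𝔅 : IsBorn 𝔅) (h : S1Gamma 𝔅) :
    Alpha2Gamma 𝔅 := by
  intro U hU
  choose e he hsplit using fun n => (hU n).exists_split h𝔅.2.1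
  let W : ℕ → ℕ → Set X := fun m j =>
    U m.unpair.1 (e m.unpair.1 (Nat.pair m.unpair.2 j))
  obtain ⟨f, hf⟩ := h W fun m => hsplit _ _
  refine ⟨fun m => W m (f m), hf, fun n => ?_⟩
  have hpick_inj : Function.Injective fun k => W (Nat.pair n k) (f (Nat.pair n k)) := by
    intro k k' hk
    simp only [W, Nat.unpair_pair] at hk
    exact (Nat.pair_eq_pair.1 (he n hk)).1
  refine infinite_of_injective_forall_mem hpick_inj fun k => ⟨⟨_, rfl⟩, ?_⟩
  simp only [W, Nat.unpair_pair]
  exact mem_range_self _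
end

section
/- Let (X,d) be a metric space and 𝔅 a bornology on X with closed base. If the space C(X,ℝ) of continuous real-valued functions with the topology τ^s_𝔅 of strong uniform convergence on 𝔅 has countable strong fan tightness at the zero function, then X satisfies S₁(𝒪_{𝔅^s},𝒪_{𝔅^s}). -/
/-! The function `x ↦ min 1 (infDist x B / δ)` vanishes on `B`, is uniformly small on a small
enlargement of `B`, and equals `1` outside any `U ⊇ enl B δ`. Taking such functions for the members
of the `n`-th cover gives sets `Aₙ` accumulating at `0`; a selection `gₙ ∈ Aₙ` with `0` in the
closure of `{gₙ}` picks `uₙ ∈ 𝒰ₙ`, and a `gₙ` that is `1`-close to `0` on `enl B δ` forces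
`enl B δ ⊆ uₙ`. -/

open Set Metric

variable {X : Type*} [MetricSpace X]

lemma subset_enl (B : Set X) {δ : ℝ} (hδ : 0 < δ) : B ⊆ enl B δ :=
  fun _ hx => mem_biUnion hx (mem_ball_self hδ)

lemma le_infDist_of_enl_subset {B U : Set X} (hB : B.Nonempty) {δ : ℝ}
    (hsub : enl B δ ⊆ U) {x : X} (hx : x ∉ U) : δ ≤ infDist x B := by
  by_contra! h
  obtain ⟨b, hb, hxb⟩ := (infDist_lt_iff hB).1 h
  exact hx (hsub (mem_biUnion hb (mem_ball.2 hxb)))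

lemma infDist_lt_of_mem_enl {B : Set X} {δ : ℝ} {x : X} (hx : x ∈ enl B δ) :
    infDist x B < δ := by
  obtain ⟨b, hb, hxb⟩ := mem_iUnion₂.1 hx
  exact (infDist_le_dist_of_mem hb).trans_lt hxb

lemma exists_sNbhd_zero_eq_one_off {B U : Set X} (hB : B.Nonempty) {δ ε : ℝ} (hδ : 0 < δ)
    (hε : 0 < ε) (hsub : enl B δ ⊆ U) :
    ∃ f : C(X, ℝ), (∀ x ∉ U, f x = 1) ∧ SNbhd B ε 0 f := by
  refine ⟨⟨fun x => min 1 (infDist x B / δ), by fun_prop⟩, fun x hx => ?_,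
    ε * δ, by positivity, fun x hx => ?_⟩
  · exact min_eq_left ((one_le_div hδ).2 (le_infDist_of_enl_subset hB hsub hx))
  · have hsmall : infDist x B / δ < ε := (div_lt_iff₀ hδ).2 (infDist_lt_of_mem_enl hx)
    have hnonneg : 0 ≤ infDist x B / δ := div_nonneg infDist_nonneg hδ.le
    simp only [ContinuousMap.coe_mk, ContinuousMap.zero_apply, sub_zero]
    rw [abs_of_nonneg (le_min zero_le_one hnonneg)]
    exact (min_le_right _ _).trans_lt hsmall

lemma enl_subset_of_sNbhd_zero {B U : Set X} {f : C(X, ℝ)} (hf : ∀ x ∉ U, f x = 1)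
    (hfB : SNbhd B 1 0 f) : ∃ δ > 0, enl B δ ⊆ U := by
  obtain ⟨δ, hδ, hlt⟩ := hfB
  refine ⟨δ, hδ, fun x hx => ?_⟩
  by_contra hxU
  simpa [hf x hxU] using hlt x hx

lemma isBsCover_of_forall_enl_subset {𝔅 𝒰 : Set (Set X)} (h𝔅 : ⋃₀ 𝔅 = univ)
    (hopen : ∀ U ∈ 𝒰, IsOpen U) (huniv : univ ∉ 𝒰)
    (henl : ∀ B ∈ 𝔅, ∃ U ∈ 𝒰, ∃ δ > 0, enl B δ ⊆ U) : IsBsCover 𝔅 𝒰 := by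
  refine ⟨hopen, huniv, eq_univ_of_forall fun x => ?_, henl⟩
  obtain ⟨B, hB, hxB⟩ := mem_sUnion.1 (h𝔅 ▸ mem_univ x)
  obtain ⟨U, hU, δ, hδ, hsub⟩ := henl B hB
  exact mem_sUnion.2 ⟨U, hU, hsub (subset_enl B hδ hxB)⟩

theorem statement11_general (𝔅 : Set (Set X)) (h𝔅 : IsBorn 𝔅)
    (hfan : ∀ A : ℕ → Set C(X, ℝ), (∀ n, SCl 𝔅 (A n) 0) →
      ∃ g : ℕ → C(X, ℝ), (∀ n, g n ∈ A n) ∧ SCl 𝔅 (Set.range g) 0) :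
    ∀ 𝒰 : ℕ → Set (Set X), (∀ n, IsBsCover 𝔅 (𝒰 n)) →
      ∃ u : ℕ → Set X, (∀ n, u n ∈ 𝒰 n) ∧ IsBsCover 𝔅 (Set.range u) := by
  intro 𝒰 h𝒰
  obtain ⟨hne, hcover, -, -⟩ := h𝔅
  let A : ℕ → Set C(X, ℝ) := fun n => {f | ∃ U ∈ 𝒰 n, ∀ x ∉ U, f x = 1}
  have hA : ∀ n, SCl 𝔅 (A n) 0 := fun n B hB ε hε => by
    obtain ⟨U, hU, δ, hδ, hsub⟩ := (h𝒰 n).2.2.2 B hB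
    obtain ⟨f, hfU, hfB⟩ := exists_sNbhd_zero_eq_one_off (hne B hB) hδ hε hsub
    exact ⟨f, ⟨U, hU, hfU⟩, hfB⟩
  obtain ⟨g, hgA, hg⟩ := hfan A hA
  choose u hu hgu using hgA
  refine ⟨u, hu, isBsCover_of_forall_enl_subset hcover ?_ ?_ fun B hB => ?_⟩
  · rintro _ ⟨n, rfl⟩
    exact (h𝒰 n).1 _ (hu n)
  · rintro ⟨n, hn⟩
    exact (h𝒰 n).2.1 (hn ▸ hu n)
  · obtain ⟨_, ⟨n, rfl⟩, hgB⟩ := hg B hB 1 one_pos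
    exact ⟨u n, mem_range_self n, enl_subset_of_sNbhd_zero (hgu n) hgB⟩

theorem statement11 (𝔅 : Set (Set X)) (h𝔅 : IsBorn 𝔅) (hcb : HasClosedBase 𝔅)
    (hfan : ∀ A : ℕ → Set C(X, ℝ), (∀ n, SCl 𝔅 (A n) 0) →
      ∃ g : ℕ → C(X, ℝ), (∀ n, g n ∈ A n) ∧ SCl 𝔅 (Set.range g) 0) :
    ∀ 𝒰 : ℕ → Set (Set X), (∀ n, IsBsCover 𝔅 (𝒰 n)) →
      ∃ u : ℕ → Set X, (∀ n, u n ∈ 𝒰 n) ∧ IsBsCover 𝔅 (Set.range u) :=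
  statement11_general 𝔅 h𝔅 hfan
end

section
/- Let (X,d) be a metric space and 𝔅 a bornology on X with closed base. If X satisfies S_fin(𝒪_{𝔅^s},𝒪_{𝔅^s}), then C(X,ℝ) with the topology τ^s_𝔅 has countable fan tightness at the zero function. -/
/-!
If arbitrarily late `A n` contain functions uniformly small on all of `X`, one such function per
index suffices. Otherwise there are `ε > 0` and `M` such that from `M` on no member of `A n` stays
below `ε` everywhere; then for `c ≤ ε` the sublevel sets `{|f| < c}`, `f ∈ A n`, form `𝔅ˢ`-covers.
Applying the selection principle to the tails `A (M + m + ·)` with `c = min ε (1 / (m + 1))` gives,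
for each `m`, finite selections approximating `0` within `1 / (m + 1)` near every `B ∈ 𝔅`; since
each index `M + m + j` arises from only finitely many pairs `(m, j)`, these merge into one sequence.
-/

open Set Metric

variable {X : Type*} [MetricSpace X]

lemma exists_finite_subsets_of_finite_fibers {ι α : Type*} {A : ℕ → Set α} {e : ι → ℕ}
    (he : ∀ k, (e ⁻¹' {k}).Finite) {G : ι → Set α} (hG : ∀ i, G i ⊆ A (e i) ∧ (G i).Finite) :
    ∃ F : ℕ → Set α, (∀ k, F k ⊆ A k ∧ (F k).Finite) ∧ ⋃ k, F k = ⋃ i, G i := by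
  refine ⟨fun k => ⋃ i ∈ e ⁻¹' {k}, G i, fun k => ⟨?_, (he k).biUnion fun i _ => (hG i).2⟩, ?_⟩
  · refine iUnion₂_subset fun i hi => ?_
    rw [← mem_singleton_iff.1 hi]
    exact (hG i).1
  · ext a
    simp

lemma SNbhd.mono {B : Set X} {ε ε' : ℝ} {f g : C(X, ℝ)} (h : SNbhd B ε f g) (hε : ε ≤ ε') :
    SNbhd B ε' f g :=
  let ⟨δ, hδ, hg⟩ := h
  ⟨δ, hδ, fun x hx => (hg x hx).trans_le hε⟩

lemma sCl_zero_of_forall_exists_abs_lt (𝔅 : Set (Set X)) {S : Set C(X, ℝ)}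
    (h : ∀ ε > 0, ∃ g ∈ S, ∀ x, |g x| < ε) : SCl 𝔅 S 0 := by
  intro B _ ε hε
  obtain ⟨g, hg, hsmall⟩ := h ε hε
  exact ⟨g, hg, 1, one_pos, fun x _ => by simpa using hsmall x⟩

lemma isBsCover_image_sublevel {𝔅 : Set (Set X)} (h𝔅 : ⋃₀ 𝔅 = univ) {A : Set C(X, ℝ)}
    (hA : SCl 𝔅 A 0) {c : ℝ} (hc : 0 < c) (hfar : ∀ f ∈ A, ∃ x, c ≤ |f x|) :
    IsBsCover 𝔅 ((fun f => {x | |f x| < c}) '' A) := by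
  refine ⟨?_, ?_, ?_, ?_⟩
  · rintro U ⟨f, -, rfl⟩
    exact isOpen_lt (continuous_abs.comp f.continuous) continuous_const
  · rintro ⟨f, hf, hU⟩
    obtain ⟨x, hx⟩ := hfar f hf
    have hxU : x ∈ {x | |f x| < c} := by simp only at hU; exact hU ▸ mem_univ x
    exact hx.not_gt hxU
  · refine eq_univ_of_forall fun x => ?_
    obtain ⟨B, hB, hxB⟩ := mem_sUnion.1 (h𝔅.symm ▸ mem_univ x : x ∈ ⋃₀ 𝔅)
    obtain ⟨g, hg, δ, hδ, hgx⟩ := hA B hB c hc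
    exact ⟨_, ⟨g, hg, rfl⟩, by simpa using hgx x (mem_biUnion hxB (mem_ball_self hδ))⟩
  · intro B hB
    obtain ⟨g, hg, δ, hδ, hgx⟩ := hA B hB c hc
    exact ⟨_, ⟨g, hg, rfl⟩, δ, hδ, fun x hx => by simpa using hgx x hx⟩

lemma exists_fan_of_frequently_uniformly_small (𝔅 : Set (Set X)) {A : ℕ → Set C(X, ℝ)}
    (h : ∀ ε > 0, ∀ M, ∃ n ≥ M, ∃ f ∈ A n, ∀ x, |f x| < ε) :
    ∃ F : ℕ → Set C(X, ℝ), (∀ n, F n ⊆ A n ∧ (F n).Finite) ∧ SCl 𝔅 (⋃ n, F n) 0 := by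
  choose n hn f hf hsmall using fun M : ℕ => h (1 / (M + 1)) Nat.one_div_pos_of_nat M
  obtain ⟨F, hF, hFf⟩ := exists_finite_subsets_of_finite_fibers (e := n) (G := fun M => {f M})
    (fun k => (finite_Iic k).subset fun M hM => (hn M).trans (mem_singleton_iff.1 hM).le)
    fun M => ⟨singleton_subset_iff.2 (hf M), finite_singleton _⟩
  refine ⟨F, hF, hFf ▸ sCl_zero_of_forall_exists_abs_lt 𝔅 fun ε hε => ?_⟩
  obtain ⟨M, hM⟩ := exists_nat_one_div_lt hε
  exact ⟨f M, mem_iUnion.2 ⟨M, rfl⟩, fun x => (hsmall M x).trans hM⟩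

section Selection

variable {𝔅 : Set (Set X)}
  (hsel : ∀ 𝒰 : ℕ → Set (Set X), (∀ n, IsBsCover 𝔅 (𝒰 n)) →
    ∃ 𝒱 : ℕ → Set (Set X), (∀ n, 𝒱 n ⊆ 𝒰 n ∧ (𝒱 n).Finite) ∧ IsBsCover 𝔅 (⋃ n, 𝒱 n))
  (h𝔅 : ⋃₀ 𝔅 = univ)
include hsel h𝔅

lemma exists_finite_selection_sNbhd {A : ℕ → Set C(X, ℝ)} (hA : ∀ n, SCl 𝔅 (A n) 0) {c : ℝ}
    (hc : 0 < c) (hfar : ∀ n, ∀ f ∈ A n, ∃ x, c ≤ |f x|) :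
    ∃ G : ℕ → Set C(X, ℝ), (∀ n, G n ⊆ A n ∧ (G n).Finite) ∧
      ∀ B ∈ 𝔅, ∃ g ∈ ⋃ n, G n, SNbhd B c 0 g := by
  obtain ⟨𝒱, h𝒱, hcover⟩ :=
    hsel _ fun n => isBsCover_image_sublevel h𝔅 (hA n) hc (hfar n)
  have hlift : ∀ n, ∃ G ⊆ A n, G.Finite ∧ 𝒱 n = (fun f => {x | |f x| < c}) '' G := fun n =>
    exists_subset_image_finite_and.1 ⟨𝒱 n, (h𝒱 n).1, (h𝒱 n).2, rfl⟩
  choose G hGA hGfin hG𝒱 using hlift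
  refine ⟨G, fun n => ⟨hGA n, hGfin n⟩, fun B hB => ?_⟩
  obtain ⟨U, hU, δ, hδ, hBU⟩ := hcover.2.2.2 B hB
  obtain ⟨n, hUn⟩ := mem_iUnion.1 hU
  obtain ⟨g, hg, rfl⟩ := hG𝒱 n ▸ hUn
  exact ⟨g, mem_iUnion.2 ⟨n, hg⟩, δ, hδ, fun x hx => by simpa using hBU hx⟩

lemma exists_fan_of_eventually_far {A : ℕ → Set C(X, ℝ)} (hA : ∀ n, SCl 𝔅 (A n) 0) {ε : ℝ}
    (hε : 0 < ε) {M : ℕ} (hfar : ∀ n ≥ M, ∀ f ∈ A n, ∃ x, ε ≤ |f x|) :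
    ∃ F : ℕ → Set C(X, ℝ), (∀ n, F n ⊆ A n ∧ (F n).Finite) ∧ SCl 𝔅 (⋃ n, F n) 0 := by
  have htail : ∀ m : ℕ, ∃ G : ℕ → Set C(X, ℝ), (∀ j, G j ⊆ A (M + m + j) ∧ (G j).Finite) ∧
      ∀ B ∈ 𝔅, ∃ g ∈ ⋃ j, G j, SNbhd B (min ε (1 / (m + 1))) 0 g := fun m =>
    exists_finite_selection_sNbhd hsel h𝔅 (fun j => hA _) (lt_min hε Nat.one_div_pos_of_nat)
      fun j f hf =>
        let ⟨x, hx⟩ := hfar _ (Nat.le_add_right_of_le (Nat.le_add_right M m)) f hf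
        ⟨x, (min_le_left _ _).trans hx⟩
  choose G hG hGB using htail
  obtain ⟨F, hF, hFG⟩ := exists_finite_subsets_of_finite_fibers
    (e := fun p : ℕ × ℕ => M + p.1 + p.2) (G := fun p => G p.1 p.2)
    (fun k => ((finite_Iic k).prod (finite_Iic k)).subset fun p hp => by
      simp only [mem_preimage, mem_singleton_iff] at hp
      simp only [mem_prod, mem_Iic]
      omega)
    fun p => hG p.1 p.2
  refine ⟨F, hF, fun B hB ε' hε' => ?_⟩
  obtain ⟨m, hm⟩ := exists_nat_one_div_lt hε'
  obtain ⟨g, hg, hgB⟩ := hGB m B hB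
  obtain ⟨j, hgj⟩ := mem_iUnion.1 hg
  exact ⟨g, hFG ▸ mem_iUnion.2 ⟨(m, j), hgj⟩, hgB.mono ((min_le_right _ _).trans hm.le)⟩

end Selection

theorem statement13_general (𝔅 : Set (Set X)) (h𝔅 : IsBorn 𝔅)
    (hsel : ∀ 𝒰 : ℕ → Set (Set X), (∀ n, IsBsCover 𝔅 (𝒰 n)) →
      ∃ 𝒱 : ℕ → Set (Set X), (∀ n, 𝒱 n ⊆ 𝒰 n ∧ (𝒱 n).Finite) ∧
        IsBsCover 𝔅 (⋃ n, 𝒱 n)) :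
    ∀ A : ℕ → Set C(X, ℝ), (∀ n, SCl 𝔅 (A n) 0) →
      ∃ F : ℕ → Set C(X, ℝ), (∀ n, F n ⊆ A n ∧ (F n).Finite) ∧
        SCl 𝔅 (⋃ n, F n) 0 := by
  intro A hA
  by_cases hsmall : ∀ ε > 0, ∀ M, ∃ n ≥ M, ∃ f ∈ A n, ∀ x, |f x| < ε
  · exact exists_fan_of_frequently_uniformly_small 𝔅 hsmall
  · push Not at hsmall
    obtain ⟨ε, hε, M, hfar⟩ := hsmall
    exact exists_fan_of_eventually_far hsel h𝔅.2.1 hA hε hfar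

theorem statement13 (𝔅 : Set (Set X)) (h𝔅 : IsBorn 𝔅) (hcb : HasClosedBase 𝔅)
    (hsel : ∀ 𝒰 : ℕ → Set (Set X), (∀ n, IsBsCover 𝔅 (𝒰 n)) →
      ∃ 𝒱 : ℕ → Set (Set X), (∀ n, 𝒱 n ⊆ 𝒰 n ∧ (𝒱 n).Finite) ∧
        IsBsCover 𝔅 (⋃ n, 𝒱 n)) :
    ∀ A : ℕ → Set C(X, ℝ), (∀ n, SCl 𝔅 (A n) 0) →
      ∃ F : ℕ → Set C(X, ℝ), (∀ n, F n ⊆ A n ∧ (F n).Finite) ∧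
        SCl 𝔅 (⋃ n, F n) 0 :=
  statement13_general 𝔅 h𝔅 hsel
end

section
/- Let (X,d) be a metric space and 𝔅 a bornology on X with closed base. If X satisfies S₁(𝒪_{𝔅^s},Γ_{𝔅^s}), then C(X,ℝ) with the topology τ^s_𝔅 is strictly Fréchet–Urysohn at the zero function. -/
open Set Metric

variable {X : Type*} [MetricSpace X]

/-!
If `0` is in the closure of `A n`, the sets `{x | |f x| < 1/(n+1)}`, `f ∈ A n`, form a
`𝔅ˢ`-cover, unless one of them is all of `X`, in which case that `f` is already uniformly small.
A `γ_{𝔅ˢ}`-selection from these covers picks `f n ∈ A n` such that every `B ∈ 𝔅` eventually has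
an enlargement on which `|f n| < 1/(n+1)`, and this is `τˢ_𝔅`-convergence to `0`.
-/

lemma mem_enl_of_mem {B : Set X} {x : X} {δ : ℝ} (hx : x ∈ B) (hδ : 0 < δ) : x ∈ enl B δ :=
  Set.mem_biUnion hx (Metric.mem_ball_self hδ)

def absSublevelCover (A : Set C(X, ℝ)) (r : ℝ) : Set (Set X) :=
  (fun f : C(X, ℝ) => {x | |f x| < r}) '' A

lemma isBsCover_absSublevelCover {𝔅 : Set (Set X)} (h𝔅 : IsBorn 𝔅) {A : Set C(X, ℝ)}
    (hA : SCl 𝔅 A 0) {r : ℝ} (hr : 0 < r) (hA_large : ¬ ∃ f ∈ A, ∀ x, |f x| < r) :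
    IsBsCover 𝔅 (absSublevelCover A r) := by
  have enl_subset : ∀ B ∈ 𝔅, ∃ U ∈ absSublevelCover A r, ∃ δ > 0, enl B δ ⊆ U := by
    intro B hB
    obtain ⟨f, hfA, δ, hδ, hf⟩ := hA B hB r hr
    exact ⟨_, Set.mem_image_of_mem _ hfA, δ, hδ, fun x hx => by simpa using hf x hx⟩
  refine ⟨?_, ?_, ?_, enl_subset⟩
  · rintro _ ⟨f, -, rfl⟩
    exact isOpen_lt f.continuous.abs continuous_const
  · rintro ⟨f, hfA, hf⟩
    exact hA_large ⟨f, hfA, Set.eq_univ_iff_forall.1 hf⟩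
  · refine Set.eq_univ_of_forall fun x => ?_
    obtain ⟨B, hB, hxB⟩ := Set.mem_sUnion.1 (h𝔅.2.1.symm ▸ Set.mem_univ x)
    have hx𝔅 : {x} ∈ 𝔅 := h𝔅.2.2.2 B hB {x} (Set.singleton_subset_iff.2 hxB) ⟨x, rfl⟩
    obtain ⟨U, hU, δ, hδ, hBU⟩ := enl_subset {x} hx𝔅
    exact ⟨U, hU, hBU (mem_enl_of_mem rfl hδ)⟩

/-- One `𝔅ˢ`-cover can stand in for the families that are not covers. -/
lemma exists_gammaCover_selection_of_exists {𝔅 : Set (Set X)}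
    (hsel : ∀ 𝒰 : ℕ → Set (Set X), (∀ n, IsBsCover 𝔅 (𝒰 n)) →
      ∃ u : ℕ → Set X, (∀ n, u n ∈ 𝒰 n) ∧ IsGammaCover 𝔅 u)
    (𝒰 : ℕ → Set (Set X)) (P : ℕ → Prop) (h𝒰 : ∀ n, ¬ P n → IsBsCover 𝔅 (𝒰 n))
    (hP : ∃ m, ¬ P m) :
    ∃ u : ℕ → Set X, (∀ n, ¬ P n → u n ∈ 𝒰 n) ∧ IsGammaCover 𝔅 u := by
  classical
  obtain ⟨m, hm⟩ := hP
  obtain ⟨u, hu, hγ⟩ := hsel (fun n => if P n then 𝒰 m else 𝒰 n) fun n => by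
    split_ifs with hn
    exacts [h𝒰 m hm, h𝒰 n hn]
  exact ⟨u, fun n hn => by simpa [hn] using hu n, hγ⟩

lemma sConv_zero_of_enl_subset {𝔅 : Set (Set X)} {g : ℕ → C(X, ℝ)} {r : ℕ → ℝ}
    (hr : Filter.Tendsto r Filter.atTop (nhds 0))
    (hg : ∀ B ∈ 𝔅, ∃ n₀, ∀ n ≥ n₀, ∃ δ > 0, enl B δ ⊆ {x | |g n x| < r n}) :
    SConv 𝔅 g 0 := by
  intro B hB ε hε
  obtain ⟨n₀, hn₀⟩ := hg B hB
  obtain ⟨n₁, hn₁⟩ := Filter.eventually_atTop.1 (hr.eventually (gt_mem_nhds hε))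
  refine ⟨max n₀ n₁, fun n hn => ?_⟩
  obtain ⟨δ, hδ, hsub⟩ := hn₀ n (le_of_max_le_left hn)
  refine ⟨δ, hδ, fun x hx => ?_⟩
  simpa using (hsub hx).out.trans (hn₁ n (le_of_max_le_right hn))

theorem statement15_general (𝔅 : Set (Set X)) (h𝔅 : IsBorn 𝔅)
    (hsel : ∀ 𝒰 : ℕ → Set (Set X), (∀ n, IsBsCover 𝔅 (𝒰 n)) →
      ∃ u : ℕ → Set X, (∀ n, u n ∈ 𝒰 n) ∧ IsGammaCover 𝔅 u) :
    ∀ A : ℕ → Set C(X, ℝ), (∀ n, SCl 𝔅 (A n) 0) →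
      ∃ g : ℕ → C(X, ℝ), (∀ n, g n ∈ A n) ∧ SConv 𝔅 g 0 := by
  intro A hA
  set r : ℕ → ℝ := fun n => 1 / (n + 1)
  have hr : Filter.Tendsto r Filter.atTop (nhds 0) := tendsto_one_div_add_atTop_nhds_zero_nat
  set P : ℕ → Prop := fun n => ∃ f ∈ A n, ∀ x, |f x| < r n
  by_cases hP : ∀ n, P n
  · choose g hgA hg using hP
    exact ⟨g, hgA, sConv_zero_of_enl_subset hr fun _ _ => ⟨0, fun n _ => ⟨1, one_pos,
      fun x _ => hg n x⟩⟩⟩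
  obtain ⟨u, hu, hγ⟩ := exists_gammaCover_selection_of_exists hsel
    (fun n => absSublevelCover (A n) (r n)) P
    (fun n hn => isBsCover_absSublevelCover h𝔅 (hA n) Nat.one_div_pos_of_nat hn) (not_forall.1 hP)
  have small_on_u : ∀ n, ∃ f ∈ A n, u n ⊆ {x | |f x| < r n} := by
    intro n
    by_cases hn : P n
    · obtain ⟨f, hfA, hf⟩ := hn
      exact ⟨f, hfA, fun x _ => hf x⟩
    · obtain ⟨f, hfA, hf⟩ := hu n hn
      exact ⟨f, hfA, hf.symm.subset⟩
  choose g hgA hg using small_on_u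
  refine ⟨g, hgA, sConv_zero_of_enl_subset hr fun B hB => ?_⟩
  obtain ⟨n₀, δ, hδ⟩ := hγ.2.2.2 B hB
  exact ⟨n₀, fun n hn => ⟨δ n, (hδ n hn).1, (hδ n hn).2.trans (hg n)⟩⟩

theorem statement15 (𝔅 : Set (Set X)) (h𝔅 : IsBorn 𝔅) (hcb : HasClosedBase 𝔅)
    (hsel : ∀ 𝒰 : ℕ → Set (Set X), (∀ n, IsBsCover 𝔅 (𝒰 n)) →
      ∃ u : ℕ → Set X, (∀ n, u n ∈ 𝒰 n) ∧ IsGammaCover 𝔅 u) :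
    ∀ A : ℕ → Set C(X, ℝ), (∀ n, SCl 𝔅 (A n) 0) →
      ∃ g : ℕ → C(X, ℝ), (∀ n, g n ∈ A n) ∧ SConv 𝔅 g 0 :=
  statement15_general 𝔅 h𝔅 hsel
end
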